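/- Let a : ℕ → ℝ be a bounded sequence and B_n = (1/n) ∑_{i=0}^{n-1} a_i its Birkhoff averages. If the sequence (B_n) does not converge, then for every k ≥ 1 the k-th order Hölder means H^{(k)}_n of (B_n) also do not converge. -/

import Mathlib

/-!
The engine is Hardy's Tauberian theorem for Cesàro means: if `|c (n+1) - c n| ≤ K / (n+1)` and
the averages of `c` converge to `L`, then `c → L`. Indeed, writing the average of `c` over a block
`[n, n + d)` with `d ≈ η n` through the averages at `n` and `n + d`, the block average is close to
`L`, while slow oscillation keeps every term of the block within `K η` of `c n`.

If `|a| ≤ C`, each Hölder mean `H^{(k)}` is itself the sequence of averages of a sequence bounded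
by `C`, so its increments are at most `2 C / n`. Hence convergence of `H^{(k+1)}`, the averages of
`H^{(k)}`, forces convergence of `H^{(k)}`, and descending in `k` gives convergence of `B`.
-/

open Filter Topology

/-- Birkhoff averages: `birk a n = (1/n) * ∑_{i=0}^{n-1} a i` (junk value `0` at `n = 0`). -/
noncomputable def birk (a : ℕ → ℝ) (n : ℕ) : ℝ := (∑ i ∈ Finset.range n, a i) / n

/-- Iterated Hölder means of a sequence `b` (indexed from 1):
`holderMeans b 0 n = b n` and `holderMeans b (k+1) n = (1/n) * ∑_{i=1}^n holderMeans b k i`. -/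
noncomputable def holderMeans (b : ℕ → ℝ) : ℕ → ℕ → ℝ
  | 0, n => b n
  | k+1, n => (∑ i ∈ Finset.Icc 1 n, holderMeans b k i) / n

open Finset

lemma natCast_mul_birk (c : ℕ → ℝ) (n : ℕ) : n * birk c n = ∑ i ∈ range n, c i := by
  rcases eq_or_ne n 0 with rfl | hn
  · simp
  · exact mul_div_cancel₀ _ (Nat.cast_ne_zero.2 hn)

lemma birk_succ_sub_birk (c : ℕ → ℝ) (n : ℕ) :
    birk c (n + 1) - birk c n = (c n - birk c n) / (n + 1) := by
  have h := natCast_mul_birk c (n + 1)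
  rw [sum_range_succ, ← natCast_mul_birk, Nat.cast_succ] at h
  field_simp
  linarith

section Averages

variable {c : ℕ → ℝ} {C : ℝ}

lemma abs_birk_le (hc : ∀ n, |c n| ≤ C) (n : ℕ) : |birk c n| ≤ C := by
  unfold birk
  rw [abs_div, Nat.abs_cast]
  exact div_le_of_le_mul₀ (Nat.cast_nonneg n) ((abs_nonneg _).trans (hc 0)) <|
    (abs_sum_le_sum_abs _ _).trans <| (sum_le_sum fun i _ => hc i).trans_eq (by simp [mul_comm])

lemma abs_birk_succ_sub_birk_le (hc : ∀ n, |c n| ≤ C) (n : ℕ) :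
    |birk c (n + 1) - birk c n| ≤ 2 * C / (n + 1) := by
  rw [birk_succ_sub_birk, abs_div, abs_of_pos (by positivity : (0 : ℝ) < n + 1)]
  gcongr
  linarith [abs_sub (c n) (birk c n), hc n, abs_birk_le hc n]

end Averages

section Tauberian

variable {c : ℕ → ℝ} {K : ℝ}

lemma nonneg_of_abs_succ_sub_le (hc : ∀ n, |c (n + 1) - c n| ≤ K / (n + 1)) : 0 ≤ K := by
  simpa using (abs_nonneg _).trans (hc 0)

lemma abs_sub_le_of_abs_succ_sub_le (hc : ∀ n, |c (n + 1) - c n| ≤ K / (n + 1)) {n i : ℕ}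
    (hni : n ≤ i) : |c i - c n| ≤ K * (i - n) / (n + 1) := by
  have hK := nonneg_of_abs_succ_sub_le hc
  induction i, hni using Nat.le_induction with
  | base => simp
  | succ i hni ih =>
    have hstep : K / (i + 1) ≤ K / (n + 1) := by gcongr
    calc |c (i + 1) - c n| ≤ |c (i + 1) - c i| + |c i - c n| := abs_sub_le _ _ _
      _ ≤ K / (n + 1) + K * (i - n) / (n + 1) := add_le_add ((hc i).trans hstep) ih
      _ = K * ((i + 1 : ℕ) - n) / (n + 1) := by push_cast; ring

lemma abs_sub_le_of_block (hc : ∀ n, |c (n + 1) - c n| ≤ K / (n + 1)) (L : ℝ) (n : ℕ)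
    {d : ℕ} (hd : 0 < d) :
    |c n - L| ≤ K * d / (n + 1) + (1 + n / d) * |birk c (n + d) - L|
      + n / d * |birk c n - L| := by
  have hd' : (0 : ℝ) < d := Nat.cast_pos.2 hd
  have hblock : ∑ i ∈ Ico n (n + d), c i = (n + d) * birk c (n + d) - n * birk c n := by
    rw [sum_Ico_eq_sub _ (Nat.le_add_right n d), ← natCast_mul_birk, ← natCast_mul_birk]
    push_cast; ring
  have hsplit : c n - L = (∑ i ∈ Ico n (n + d), (c n - c i)) / d
      + ((n + d) * (birk c (n + d) - L) - n * (birk c n - L)) / d := by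
    rw [sum_sub_distrib, hblock, sum_const, Nat.card_Ico, Nat.add_sub_cancel_left, nsmul_eq_mul]
    field_simp
    ring
  have hosc : |∑ i ∈ Ico n (n + d), (c n - c i)| ≤ d * (K * d / (n + 1)) :=
    calc |∑ i ∈ Ico n (n + d), (c n - c i)| ≤ ∑ i ∈ Ico n (n + d), |c n - c i| :=
          abs_sum_le_sum_abs _ _
      _ ≤ ∑ _i ∈ Ico n (n + d), K * d / (n + 1) := sum_le_sum fun i hi => by
          rw [mem_Ico] at hi
          have hK := nonneg_of_abs_succ_sub_le hc
          have hgap : (i : ℝ) - n ≤ d := by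
            rw [sub_le_iff_le_add']; exact_mod_cast hi.2.le
          rw [abs_sub_comm]
          refine (abs_sub_le_of_abs_succ_sub_le hc hi.1).trans ?_
          gcongr
      _ = d * (K * d / (n + 1)) := by simp
  have hmeans : |(n + d) * (birk c (n + d) - L) - n * (birk c n - L)|
      ≤ (n + d) * |birk c (n + d) - L| + n * |birk c n - L| := by
    refine (abs_sub _ _).trans_eq ?_
    rw [abs_mul, abs_mul, abs_of_nonneg (by positivity : (0 : ℝ) ≤ n + d), Nat.abs_cast]
  rw [hsplit]
  calc _ ≤ _ := abs_add_le _ _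
    _ ≤ K * d / (n + 1) + ((n + d) * |birk c (n + d) - L| + n * |birk c n - L|) / d := by
        rw [abs_div, abs_div, abs_of_pos hd']
        exact add_le_add (by rw [div_le_iff₀ hd', mul_comm]; exact hosc)
          (div_le_div_of_nonneg_right hmeans hd'.le)
    _ = _ := by field_simp; ring

lemma abs_sub_le_of_block_floor (hc : ∀ n, |c (n + 1) - c n| ≤ K / (n + 1)) (L : ℝ)
    {η : ℝ} (hη : 0 < η) (n : ℕ) :
    |c n - L| ≤ K * η + K / (n + 1) + (1 + η⁻¹) * |birk c (n + (⌊η * n⌋₊ + 1)) - L|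
      + η⁻¹ * |birk c n - L| := by
  have hK := nonneg_of_abs_succ_sub_le hc
  set d := ⌊η * n⌋₊ + 1
  have hd_lt : η * n < d := by simpa [d] using Nat.lt_floor_add_one (η * n)
  have hd_le : (d : ℝ) ≤ η * n + 1 := by
    simp only [d, Nat.cast_add, Nat.cast_one]
    gcongr
    exact Nat.floor_le (by positivity)
  have hd : (0 : ℝ) < d := by positivity
  have hratio : (n : ℝ) / d ≤ η⁻¹ := by
    rw [div_le_iff₀ hd, ← div_eq_inv_mul, le_div_iff₀ hη, mul_comm]
    exact hd_lt.le
  have hdens : K * d / (n + 1) ≤ K * η + K / (n + 1) := by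
    rw [div_le_iff₀ (by positivity), add_mul, div_mul_cancel₀ _ (by positivity)]
    nlinarith
  refine (abs_sub_le_of_block hc L n (d := d) (Nat.succ_pos _)).trans ?_
  gcongr

theorem tendsto_of_tendsto_birk (hc : ∀ n, |c (n + 1) - c n| ≤ K / (n + 1)) {L : ℝ}
    (hL : Tendsto (birk c) atTop (𝓝 L)) : Tendsto c atTop (𝓝 L) := by
  have hK := nonneg_of_abs_succ_sub_le hc
  rw [Metric.tendsto_nhds]
  intro ε hε
  set η := ε / (2 * (K + 1)) with hη_def
  have hη : 0 < η := by positivity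
  have hKη : K * η < ε / 2 := by
    rw [hη_def, mul_div_assoc', div_lt_iff₀ (by positivity)]
    nlinarith
  have hlim : Tendsto (fun n : ℕ => K * η + K / (n + 1)
      + (1 + η⁻¹) * |birk c (n + (⌊η * n⌋₊ + 1)) - L| + η⁻¹ * |birk c n - L|)
      atTop (𝓝 (K * η)) := by
    have hinv : Tendsto (fun n : ℕ => K / ((n : ℝ) + 1)) atTop (𝓝 0) := by
      simpa [Function.comp_def] using
        (tendsto_const_div_atTop_nhds_zero_nat K).comp (tendsto_add_atTop_nat 1)
    have hshift : Tendsto (fun n : ℕ => n + (⌊η * n⌋₊ + 1)) atTop atTop :=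
      tendsto_atTop_mono (fun n => Nat.le_add_right n _) tendsto_id
    have hfar : Tendsto (fun n : ℕ => |birk c (n + (⌊η * n⌋₊ + 1)) - L|) atTop (𝓝 0) := by
      simpa using ((hL.comp hshift).sub_const L).abs
    have hnear : Tendsto (fun n : ℕ => |birk c n - L|) atTop (𝓝 0) := by
      simpa using (hL.sub_const L).abs
    simpa using ((tendsto_const_nhds.add hinv).add (hfar.const_mul _)).add (hnear.const_mul _)
  filter_upwards [(tendsto_order.1 hlim).2 (K * η + ε / 2) (by linarith)] with n hn
  rw [Real.dist_eq]
  linarith [abs_sub_le_of_block_floor hc L hη n]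

end Tauberian

lemma tendsto_birk_of_tendsto_birk_birk_succ {c : ℕ → ℝ} {C : ℝ} (hc : ∀ n, |c n| ≤ C) {L : ℝ}
    (h : Tendsto (birk fun i => birk c (i + 1)) atTop (𝓝 L)) :
    Tendsto (birk c) atTop (𝓝 L) := by
  have hC : 0 ≤ C := (abs_nonneg _).trans (hc 0)
  refine (tendsto_add_atTop_iff_nat 1).1 (tendsto_of_tendsto_birk (K := 2 * C) (fun n => ?_) h)
  refine (abs_birk_succ_sub_birk_le hc (n + 1)).trans ?_
  gcongr
  linarith

lemma holderMeans_succ (b : ℕ → ℝ) (k : ℕ) :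
    holderMeans b (k + 1) = birk (fun i => holderMeans b k (i + 1)) := by
  ext n
  rw [holderMeans, birk, ← Ico_add_one_right_eq_Icc, sum_Ico_eq_sum_range]
  simp only [add_tsub_cancel_right, add_comm 1]

lemma exists_holderMeans_birk_eq_birk {a : ℕ → ℝ} {C : ℝ} (ha : ∀ n, |a n| ≤ C) (k : ℕ) :
    ∃ c : ℕ → ℝ, (∀ n, |c n| ≤ C) ∧ holderMeans (birk a) k = birk c := by
  induction k with
  | zero => exact ⟨a, ha, rfl⟩
  | succ k ih =>
    obtain ⟨c, hc, hk⟩ := ih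
    exact ⟨_, fun n => hk ▸ abs_birk_le hc (n + 1), holderMeans_succ _ k⟩

theorem holder_means_of_divergent_birkhoff_diverge_general (a : ℕ → ℝ)
    (hbdd : ∃ C : ℝ, ∀ n, |a n| ≤ C)
    (hdiv : ¬ ∃ L : ℝ, Tendsto (birk a) atTop (𝓝 L))
    (k : ℕ) :
    ¬ ∃ L : ℝ, Tendsto (fun n : ℕ => holderMeans (birk a) k n) atTop (𝓝 L) := by
  obtain ⟨C, ha⟩ := hbdd
  rintro ⟨L, hL⟩
  refine hdiv ⟨L, ?_⟩
  induction k with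
  | zero => exact hL
  | succ k ih =>
    obtain ⟨c, hc, hk⟩ := exists_holderMeans_birk_eq_birk ha k
    rw [holderMeans_succ, hk] at hL
    exact ih (hk ▸ tendsto_birk_of_tendsto_birk_birk_succ hc hL)

/-- If `a` is bounded and the Birkhoff averages `B_n = (1/n) ∑_{i=0}^{n-1} a i` do not
converge, then for every `k ≥ 1` the `k`-th order Hölder means `H^{(k)}_n` of `(B_n)`
do not converge either. -/
theorem holder_means_of_divergent_birkhoff_diverge (a : ℕ → ℝ)
    (hbdd : ∃ C : ℝ, ∀ n, |a n| ≤ C)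
    (hdiv : ¬ ∃ L : ℝ, Tendsto (birk a) atTop (𝓝 L))
    (k : ℕ) (hk : 1 ≤ k) :
    ¬ ∃ L : ℝ, Tendsto (fun n : ℕ => holderMeans (birk a) k n) atTop (𝓝 L) :=
  holder_means_of_divergent_birkhoff_diverge_general a hbdd hdiv k
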